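/- Let K be a field of characteristic p, F = K((π)), and let f, u ∈ F with v the π-adic valuation, u a unit, and e, m positive integers with p ∤ em. If τ = u·π^e, then for any n-form ω_n ∈ Ω^n_K, the class of ω_n/τ^m in U_m/U_{m-1} of H^{n+1}_p(K((τ))) maps under extension of scalars to the class of ū^{-m}·ω_n/π^{em} in U_{em}/U_{em-1} of H^{n+1}_p(K((π))), i.e., extension of scalars on the graded quotient Ω^n_{K̄} is multiplication by ū^{-m}. -/

import Mathlib

/-!
Write `τ^{-m} − ū^{-m}π^{-em} = (u^{-m} − u₀^{-m}) · π^{-em}`. Since `u ≡ u₀ mod π` are units and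
`x − y` divides `x^m − y^m`, the first factor has positive valuation, so the whole scalar has
valuation at least `1 − em`. Multiplying the generators `a · db/b` of `ω` by it therefore yields
generators of `U_{em−1}`.
-/

/-- The subgroup of `n`-forms by which one quotients to obtain `H^{n+1}_p(F)`:
generated by the exact forms `dc₁ ∧ ⋯ ∧ dc_n` and the image of the Artin–Schreier–Kato
operator `(a^p − a)·(db₁/b₁) ∧ ⋯ ∧ (db_n/b_n)`. -/
noncomputable def hRel (p : ℕ) (F : Type) [Field F] (n : ℕ) :
    AddSubgroup (ExteriorAlgebra F (KaehlerDifferential ℤ F)) :=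
  AddSubgroup.closure
    ({x | ∃ c : Fin n → F,
        x = ExteriorAlgebra.ιMulti F n fun i => KaehlerDifferential.D ℤ F (c i)} ∪
     {x | ∃ (a : F) (b : Fin n → F), (∀ i, b i ≠ 0) ∧
        x = (a ^ p - a) • ExteriorAlgebra.ιMulti F n
          fun i => (b i)⁻¹ • KaehlerDifferential.D ℤ F (b i)})

namespace AddValuation

variable {R K Γ₀ : Type*}

theorem le_map_pow_sub_pow [CommRing R] [LinearOrderedAddCommMonoidWithTop Γ₀]
    (v : AddValuation R Γ₀) {x y : R} {g : Γ₀} (hx : 0 ≤ v x) (hy : 0 ≤ v y)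
    (h : g ≤ v (x - y)) (m : ℕ) : g ≤ v (x ^ m - y ^ m) := by
  have hsum : 0 ≤ v (∑ i ∈ Finset.range m, x ^ i * y ^ (m - 1 - i)) :=
    v.map_le_sum fun i _ => by
      rw [v.map_mul, v.map_pow, v.map_pow]
      exact add_nonneg (nsmul_nonneg hx _) (nsmul_nonneg hy _)
  rw [← geom_sum₂_mul, v.map_mul]
  simpa using add_le_add hsum h

variable [Field K] [LinearOrderedAddCommGroupWithTop Γ₀] (v : AddValuation K Γ₀)

theorem ne_zero_of_map_eq_zero {x : K} (hx : v x = 0) : x ≠ 0 :=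
  v.ne_top_iff.1 (by simp [hx])

theorem map_inv_sub_inv {x y : K} (hx : v x = 0) (hy : v y = 0) :
    v (x⁻¹ - y⁻¹) = v (x - y) := by
  rw [inv_sub_inv' (v.ne_zero_of_map_eq_zero hx) (v.ne_zero_of_map_eq_zero hy), v.map_mul,
    v.map_mul, v.map_inv, v.map_inv, hx, hy, v.map_sub_swap]
  simp

theorem le_map_inv_pow_sub_inv_pow {x y : K} {g : Γ₀} (hx : v x = 0) (hy : v y = 0)
    (h : g ≤ v (x - y)) (m : ℕ) : g ≤ v (x⁻¹ ^ m - y⁻¹ ^ m) := by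
  refine v.le_map_pow_sub_pow ?_ ?_ (v.map_inv_sub_inv hx hy ▸ h) m <;> simp [v.map_inv, *]

theorem sub_nsmul_le_map_zpow_sub {u w π : K} {g : Γ₀} (hu : v u = 0) (hw : v w = 0)
    (h : g ≤ v (u - w)) (e m : ℕ) :
    g - (e * m) • v π ≤ v ((u * π ^ e) ^ (-(m : ℤ)) - w⁻¹ ^ m * π ^ (-((e * m : ℕ) : ℤ))) := by
  have hsplit : (u * π ^ e) ^ (-(m : ℤ)) - w⁻¹ ^ m * π ^ (-((e * m : ℕ) : ℤ))
      = (u⁻¹ ^ m - w⁻¹ ^ m) * (π ^ (e * m))⁻¹ := by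
    simp only [zpow_neg, zpow_natCast, mul_pow, ← pow_mul, mul_inv, inv_pow]
    ring
  rw [hsplit, v.map_mul, v.map_inv, v.map_pow, sub_eq_add_neg]
  gcongr
  exact v.le_map_inv_pow_sub_inv_pow hu hw h m

end AddValuation

namespace HahnSeries

variable {Γ R : Type*} [AddCancelCommMonoid Γ] [LinearOrder Γ] [IsOrderedCancelAddMonoid Γ]
  [Ring R] [IsDomain R]

theorem coe_le_addVal_iff {x : R⟦Γ⟧} {g : Γ} :
    (g : WithTop Γ) ≤ addVal Γ R x ↔ x = 0 ∨ g ≤ x.order := by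
  by_cases hx : x = 0 <;> simp [hx]

theorem coe_le_addVal_comap_iff {S : Type*} [Ring S] {f : S →+* R⟦Γ⟧}
    (hf : Function.Injective f) {x : S} {g : Γ} :
    (g : WithTop Γ) ≤ (addVal Γ R).comap f x ↔ x = 0 ∨ g ≤ (f x).order := by
  rw [← map_eq_zero_iff f hf]
  exact coe_le_addVal_iff

end HahnSeries

theorem izhboldin_graded_extension_of_scalars_general
    (p : ℕ) (K : Type) [Field K]
    (F : Type) [Field F] (e : F ≃+* LaurentSeries K)
    (C : K →+* F) (hC : ∀ a : K, e (C a) = HahnSeries.C a)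
    (π : F) (hπ : e π = HahnSeries.single (1 : ℤ) (1 : K))
    (e₀ m n : ℕ)
    (u : F) (u₀ : K) (hu₀ : u₀ ≠ 0)
    (hu : u - C u₀ = 0 ∨ 0 < (e (u - C u₀)).order)
    (τ : F) (hτ : τ = u * π ^ e₀)
    (ω : ExteriorAlgebra F (KaehlerDifferential ℤ F))
    (hω : ω ∈ AddSubgroup.closure
      {x | ∃ (a : K) (b : Fin n → K), (∀ i, b i ≠ 0) ∧
        x = (C a) • ExteriorAlgebra.ιMulti F n
          fun i => (C (b i))⁻¹ • KaehlerDifferential.D ℤ F (C (b i))}) :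
    (τ ^ (-(m : ℤ))) • ω - ((C (u₀⁻¹ ^ m)) * π ^ (-((e₀ * m : ℕ) : ℤ))) • ω ∈
      (AddSubgroup.closure
        {x | ∃ (f : F) (g : Fin n → F), (∀ i, g i ≠ 0) ∧
          (f = 0 ∨ -((e₀ * m : ℕ) : ℤ) + 1 ≤ (e f).order) ∧
          x = f • ExteriorAlgebra.ιMulti F n
            fun i => (g i)⁻¹ • KaehlerDifferential.D ℤ F (g i)}) ⊔
      hRel p F n := by
  set v := (HahnSeries.addVal ℤ K).comap (e : F →+* LaurentSeries K)
  have hv : ∀ x, v x = HahnSeries.addVal ℤ K (e x) := fun _ => rfl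
  have hv_le_iff : ∀ {x : F} {g : ℤ}, (g : WithTop ℤ) ≤ v x ↔ x = 0 ∨ g ≤ (e x).order :=
    HahnSeries.coe_le_addVal_comap_iff e.injective
  have hvC : ∀ a, 0 ≤ v (C a) := fun a => by
    by_cases ha : a = 0 <;> simp [hv, hC, ha]
  have hvCu₀ : v (C u₀) = 0 := by simp [hv, hC, hu₀]
  have hvπ : v π = 1 := by simp [hv, hπ]
  have hvu_sub : (1 : WithTop ℤ) ≤ v (u - C u₀) := by
    exact_mod_cast hv_le_iff.2 (hu.imp_right fun h => by omega)
  have hvu : v u = 0 := by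
    rw [v.map_eq_of_lt_sub (x := C u₀) (hvCu₀ ▸ zero_lt_one.trans_le hvu_sub), hvCu₀]
  have hvc := v.sub_nsmul_le_map_zpow_sub hvu hvCu₀ hvu_sub e₀ m (π := π)
  rw [hvπ, ← hτ, ← map_inv₀, ← map_pow, nsmul_one] at hvc
  rw [← sub_smul]
  refine AddSubgroup.mem_sup_left ((AddSubgroup.closure_le
    (K := (AddSubgroup.closure _).comap (DistribSMul.toAddMonoidHom _ _))).2 ?_ hω)
  rintro _ ⟨a, b, hb, rfl⟩
  refine AddSubgroup.subset_closure ⟨_ * C a, fun i => C (b i),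
    fun i => (map_ne_zero C).2 (hb i), ?_, smul_smul _ _ _⟩
  refine hv_le_iff.1 ?_
  rw [v.map_mul]
  calc (((-((e₀ * m : ℕ) : ℤ) + 1 : ℤ)) : WithTop ℤ) = 1 - ((e₀ * m : ℕ) : WithTop ℤ) := by
        rw [← WithTop.coe_natCast, ← WithTop.coe_one, ← WithTop.LinearOrderedAddCommGroup.coe_sub]
        congr 1
        ring
    _ ≤ _ := hvc
    _ ≤ _ := le_add_of_nonneg_right (hvC a)

/-- Let `K` be a field of characteristic `p` and `F = K((π))`.  Let `u` be a
unit with residue `u₀` and `τ = u·π^e`, and let `m, e > 0` with `p ∤ em`.  For any `n`-form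
`ω_n` defined over the residue field `K`, the classes of `ω_n/τ^m` and of
`ū^{-m}·ω_n/π^{em}` agree in `U_{em}/U_{em-1}` of `H^{n+1}_p(K((π)))`: their difference lies
in `U_{em-1}` (modulo the defining relations of `H^{n+1}_p`).  In other words, extension of
scalars on the graded quotient `Ω^n_{K̄}` is multiplication by `ū^{-m}`. -/
theorem izhboldin_graded_extension_of_scalars
    (p : ℕ) [Fact p.Prime] (K : Type) [Field K] [CharP K p]
    (F : Type) [Field F] [CharP F p] (e : F ≃+* LaurentSeries K)
    (C : K →+* F) (hC : ∀ a : K, e (C a) = HahnSeries.C a)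
    (π : F) (hπ : e π = HahnSeries.single (1 : ℤ) (1 : K))
    (e₀ m n : ℕ) (he₀ : 0 < e₀) (hm : 0 < m) (hpem : ¬ p ∣ e₀ * m)
    (u : F) (hu0 : u ≠ 0) (u₀ : K) (hu₀ : u₀ ≠ 0)
    (hu : u - C u₀ = 0 ∨ 0 < (e (u - C u₀)).order)
    (τ : F) (hτ : τ = u * π ^ e₀)
    (ω : ExteriorAlgebra F (KaehlerDifferential ℤ F))
    (hω : ω ∈ AddSubgroup.closure
      {x | ∃ (a : K) (b : Fin n → K), (∀ i, b i ≠ 0) ∧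
        x = (C a) • ExteriorAlgebra.ιMulti F n
          fun i => (C (b i))⁻¹ • KaehlerDifferential.D ℤ F (C (b i))}) :
    (τ ^ (-(m : ℤ))) • ω - ((C (u₀⁻¹ ^ m)) * π ^ (-((e₀ * m : ℕ) : ℤ))) • ω ∈
      (AddSubgroup.closure
        {x | ∃ (f : F) (g : Fin n → F), (∀ i, g i ≠ 0) ∧
          (f = 0 ∨ -((e₀ * m : ℕ) : ℤ) + 1 ≤ (e f).order) ∧
          x = f • ExteriorAlgebra.ιMulti F n
            fun i => (g i)⁻¹ • KaehlerDifferential.D ℤ F (g i)}) ⊔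
      hRel p F n :=
  izhboldin_graded_extension_of_scalars_general p K F e C hC π hπ e₀ m n u u₀ hu₀ hu τ hτ ω hω
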